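/- arXiv:2101.04742 — 3 statements merged into one kernel-verified Lean document; each statement's English description precedes it below -/
import Mathlib

section
/- Belief Soundness: For every belief state β, environment σ, statement s, belief state β', environment σ', and observation list o, if σ ∈ β and ⟨β, σ, s⟩ ⇓ ⟨β', σ' | o⟩ (the execution succeeds, producing a non-error configuration), then σ' ∈ β'. -/
namespace BLIMP

/-- Program variables. -/
abbrev Var := String
/-- Values. -/
abbrev Val := ℤ
/-- An environment maps program variables to values. -/
abbrev Env := Var → Val
/-- A belief state is a set of environments. -/
abbrev Belief := Set Env

/-- `upd σ x c` is the environment `σ` with `x` rebound to `c` (written `σ[x ↦ c]`). -/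
def upd (σ : Env) (x : Var) (c : Val) : Env :=
  fun z => if z = x then c else σ z

/-- Expressions: program variables, constants, quantified variables,
the placeholder `.` of choose statements, and arithmetic operators. -/
inductive Exp
  | var (x : Var)
  | const (c : Val)
  | qvar (y : String)
  | hole
  | add (e₁ e₂ : Exp)
  | sub (e₁ e₂ : Exp)
  | mul (e₁ e₂ : Exp)
  | div (e₁ e₂ : Exp)

/-- Big-step evaluation of expressions: `⟨σ, e⟩ ⇓ c`. -/
inductive Eval : Env → Exp → Val → Prop
  | var (σ : Env) (x : Var) : Eval σ (.var x) (σ x)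
  | const (σ : Env) (c : Val) : Eval σ (.const c) c
  | add {σ e₁ e₂ c₁ c₂} : Eval σ e₁ c₁ → Eval σ e₂ c₂ → Eval σ (.add e₁ e₂) (c₁ + c₂)
  | sub {σ e₁ e₂ c₁ c₂} : Eval σ e₁ c₁ → Eval σ e₂ c₂ → Eval σ (.sub e₁ e₂) (c₁ - c₂)
  | mul {σ e₁ e₂ c₁ c₂} : Eval σ e₁ c₁ → Eval σ e₂ c₂ → Eval σ (.mul e₁ e₂) (c₁ * c₂)
  | div {σ e₁ e₂ c₁ c₂} : Eval σ e₁ c₁ → Eval σ e₂ c₂ → Eval σ (.div e₁ e₂) (c₁ / c₂)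

/-- Propositions. -/
inductive Pprop
  | bconst (b : Bool)
  | lt (e₁ e₂ : Exp)
  | eq (e₁ e₂ : Exp)
  | and (p₁ p₂ : Pprop)
  | or (p₁ p₂ : Pprop)
  | not (p : Pprop)

/-- Satisfaction of a proposition by an environment: `σ ⊨ p`. -/
def Sat (σ : Env) : Pprop → Prop
  | .bconst b => b = true
  | .lt e₁ e₂ => ∃ c₁ c₂, Eval σ e₁ c₁ ∧ Eval σ e₂ c₂ ∧ c₁ < c₂
  | .eq e₁ e₂ => ∃ c₁ c₂, Eval σ e₁ c₁ ∧ Eval σ e₂ c₂ ∧ c₁ = c₂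
  | .and p₁ p₂ => Sat σ p₁ ∧ Sat σ p₂
  | .or p₁ p₂ => Sat σ p₁ ∨ Sat σ p₂
  | .not p => ¬ Sat σ p

/-- `e.substHole c` replaces the placeholder `.` by the constant `c`. -/
def Exp.substHole : Exp → Val → Exp
  | .var x, _ => .var x
  | .const c, _ => .const c
  | .qvar y, _ => .qvar y
  | .hole, c => .const c
  | .add e₁ e₂, c => .add (e₁.substHole c) (e₂.substHole c)
  | .sub e₁ e₂, c => .sub (e₁.substHole c) (e₂.substHole c)
  | .mul e₁ e₂, c => .mul (e₁.substHole c) (e₂.substHole c)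
  | .div e₁ e₂, c => .div (e₁.substHole c) (e₂.substHole c)

/-- `p.substHole c` is `p[c/.]`. -/
def Pprop.substHole : Pprop → Val → Pprop
  | .bconst b, _ => .bconst b
  | .lt e₁ e₂, c => .lt (e₁.substHole c) (e₂.substHole c)
  | .eq e₁ e₂, c => .eq (e₁.substHole c) (e₂.substHole c)
  | .and p₁ p₂, c => .and (p₁.substHole c) (p₂.substHole c)
  | .or p₁ p₂, c => .or (p₁.substHole c) (p₂.substHole c)
  | .not p, c => .not (p.substHole c)

/-- `e.substQ y c` substitutes the constant `c` for the quantified variable `y`. -/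
def Exp.substQ : Exp → String → Val → Exp
  | .var x, _, _ => .var x
  | .const c', _, _ => .const c'
  | .qvar y', y, c => if y' = y then .const c else .qvar y'
  | .hole, _, _ => .hole
  | .add e₁ e₂, y, c => .add (e₁.substQ y c) (e₂.substQ y c)
  | .sub e₁ e₂, y, c => .sub (e₁.substQ y c) (e₂.substQ y c)
  | .mul e₁ e₂, y, c => .mul (e₁.substQ y c) (e₂.substQ y c)
  | .div e₁ e₂, y, c => .div (e₁.substQ y c) (e₂.substQ y c)

def Pprop.substQ : Pprop → String → Val → Pprop
  | .bconst b, _, _ => .bconst b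
  | .lt e₁ e₂, y, c => .lt (e₁.substQ y c) (e₂.substQ y c)
  | .eq e₁ e₂, y, c => .eq (e₁.substQ y c) (e₂.substQ y c)
  | .and p₁ p₂, y, c => .and (p₁.substQ y c) (p₂.substQ y c)
  | .or p₁ p₂, y, c => .or (p₁.substQ y c) (p₂.substQ y c)
  | .not p, y, c => .not (p.substQ y c)

/-- Modal propositions, built from `□p` and `◇p` by `&&`, `||`, `!`. -/
inductive MProp
  | box (p : Pprop)
  | dia (p : Pprop)
  | and (P₁ P₂ : MProp)
  | or (P₁ P₂ : MProp)
  | not (P : MProp)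

/-- Satisfaction of a modal proposition by a belief state: `β ⊨ P□`. -/
def MSat (β : Belief) : MProp → Prop
  | .box p => ∀ σ ∈ β, Sat σ p
  | .dia p => ∃ σ ∈ β, Sat σ p
  | .and P₁ P₂ => MSat β P₁ ∧ MSat β P₂
  | .or P₁ P₂ => MSat β P₁ ∨ MSat β P₂
  | .not P => ¬ MSat β P

def MProp.substQ : MProp → String → Val → MProp
  | .box p, y, c => .box (p.substQ y c)
  | .dia p, y, c => .dia (p.substQ y c)
  | .and P₁ P₂, y, c => .and (P₁.substQ y c) (P₂.substQ y c)
  | .or P₁ P₂, y, c => .or (P₁.substQ y c) (P₂.substQ y c)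
  | .not P, y, c => .not (P.substQ y c)

/-- Existential propositions `∃ ŷ. P□`. -/
structure EProp where
  vars : List String
  prop : MProp

/-- Satisfaction of `∃ ŷ. P□` by a belief state, by recursion on the
quantified variables. -/
def ESatAux (β : Belief) : List String → MProp → Prop
  | [], P => MSat β P
  | y :: ys, P => ∃ c : Val, ESatAux β ys (P.substQ y c)

/-- `β ⊨ p∃`. -/
def ESat (β : Belief) (pe : EProp) : Prop := ESatAux β pe.vars pe.prop

/-- BLIMP statements. -/
inductive Stmt
  | assign (x : Var) (e : Exp)
  | choose (x : Var) (p : Pprop)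
  | assert (pe : EProp)
  | observe (x : Var)
  | ite (p : Pprop) (s₁ s₂ : Stmt)
  | infer (P : MProp) (s₁ s₂ : Stmt)
  | while (p : Pprop) (inv : EProp) (s : Stmt)
  | seq (s₁ s₂ : Stmt)
  | skip

/-- Observation lists: lists of (variable, value) pairs. -/
abbrev Obs := List (Var × Val)

/-- Configurations: `some (β, μ)` is a non-error configuration; `none` is the error `⊥`. -/
abbrev Config := Option (Belief × Option Env)

/-- Splitting the optional true environment between the branches of an
if statement with nondeterministic condition `p`: the true environment
(if non-null) is passed to the branch whose condition it satisfies,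
and the null environment `·` is passed to the other branch. -/
inductive SplitEnv : Option Env → Pprop → Option Env → Option Env → Prop
  | none {p} : SplitEnv none p none none
  | pos {σ p} (h : Sat σ p) : SplitEnv (some σ) p (some σ) none
  | neg {σ p} (h : ¬ Sat σ p) : SplitEnv (some σ) p none (some σ)

/-- The resulting optional true environment of a nondeterministic if
statement is the one resulting from the branch the true environment
actually took (`·` if the true environment was `·`). -/
inductive JoinEnv : Option Env → Pprop → Option Env → Option Env → Option Env → Prop
  | none {p μT' μF'} : JoinEnv none p μT' μF' none
  | pos {σ p μT' μF'} (h : Sat σ p) : JoinEnv (some σ) p μT' μF' μT'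
  | neg {σ p μT' μF'} (h : ¬ Sat σ p) : JoinEnv (some σ) p μT' μF' μF'

/-- The big-step semantics of BLIMP statements:
`BigStep β μ s C o` means `⟨β, μ, s⟩ ⇓ ⟨C | o⟩`. -/
inductive BigStep : Belief → Option Env → Stmt → Config → Obs → Prop
  /- Assignment. -/
  | assign_none {β x e} :
      BigStep β none (.assign x e)
        (some ({σ' | ∃ σβ ∈ β, ∃ cβ, Eval σβ e cβ ∧ σ' = upd σβ x cβ}, none)) []
  | assign_some {β σ x e c} (h : Eval σ e c) :
      BigStep β (some σ) (.assign x e)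
        (some ({σ' | ∃ σβ ∈ β, ∃ cβ, Eval σβ e cβ ∧ σ' = upd σβ x cβ},
          some (upd σ x c))) []
  /- Choose. -/
  | choose_none {β x p} :
      BigStep β none (.choose x p)
        (some ({σ' | ∃ σβ ∈ β, ∃ cβ, Sat σβ (p.substHole cβ) ∧ σ' = upd σβ x cβ},
          none)) []
  | choose_some {β σ x p c} (h : Sat σ (p.substHole c)) :
      BigStep β (some σ) (.choose x p)
        (some ({σ' | ∃ σβ ∈ β, ∃ cβ, Sat σβ (p.substHole cβ) ∧ σ' = upd σβ x cβ},
          some (upd σ x c))) []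
  /- Assert. -/
  | assert_ok {β μ pe} (h : ESat β pe) :
      BigStep β μ (.assert pe) (some (β, μ)) []
  | assert_fail {β μ pe} (h : ¬ ESat β pe) :
      BigStep β μ (.assert pe) none []
  /- Observe. -/
  | observe_some {β σ x} :
      BigStep β (some σ) (.observe x)
        (some ({σβ ∈ β | σβ x = σ x}, some σ)) [(x, σ x)]
  | observe_none {β x} :
      BigStep β none (.observe x) none []
  /- If with deterministic condition. -/
  | ite_det_true {β μ p s₁ s₂ C o} (h : MSat β (.box p))
      (hs : BigStep β μ s₁ C o) :
      BigStep β μ (.ite p s₁ s₂) C o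
  | ite_det_false {β μ p s₁ s₂ C o} (h : MSat β (.box (.not p)))
      (hs : BigStep β μ s₂ C o) :
      BigStep β μ (.ite p s₁ s₂) C o
  /- If with nondeterministic condition. -/
  | ite_nondet {β μ p s₁ s₂ μT μF βT' βF' μT' μF' μ'}
      (h : MSat β (.and (.dia p) (.dia (.not p))))
      (hsplit : SplitEnv μ p μT μF)
      (hs₁ : BigStep {σβ ∈ β | Sat σβ p} μT s₁ (some (βT', μT')) [])
      (hs₂ : BigStep {σβ ∈ β | ¬ Sat σβ p} μF s₂ (some (βF', μF')) [])
      (hjoin : JoinEnv μ p μT' μF' μ') :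
      BigStep β μ (.ite p s₁ s₂) (some (βT' ∪ βF', μ')) []
  | ite_nondet_obs {β μ p s₁ s₂ μT μF βT' βF' μT' μF' oT oF}
      (h : MSat β (.and (.dia p) (.dia (.not p))))
      (hsplit : SplitEnv μ p μT μF)
      (hs₁ : BigStep {σβ ∈ β | Sat σβ p} μT s₁ (some (βT', μT')) oT)
      (hs₂ : BigStep {σβ ∈ β | ¬ Sat σβ p} μF s₂ (some (βF', μF')) oF)
      (ho : oT ≠ [] ∨ oF ≠ []) :
      BigStep β μ (.ite p s₁ s₂) none []
  | ite_nondet_err₁ {β μ p s₁ s₂ μT μF oT}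
      (h : MSat β (.and (.dia p) (.dia (.not p))))
      (hsplit : SplitEnv μ p μT μF)
      (hs₁ : BigStep {σβ ∈ β | Sat σβ p} μT s₁ none oT) :
      BigStep β μ (.ite p s₁ s₂) none []
  | ite_nondet_err₂ {β μ p s₁ s₂ μT μF oF}
      (h : MSat β (.and (.dia p) (.dia (.not p))))
      (hsplit : SplitEnv μ p μT μF)
      (hs₂ : BigStep {σβ ∈ β | ¬ Sat σβ p} μF s₂ none oF) :
      BigStep β μ (.ite p s₁ s₂) none []
  /- Infer. -/
  | infer_true {β μ P s₁ s₂ C o} (h : MSat β P)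
      (hs : BigStep β μ s₁ C o) :
      BigStep β μ (.infer P s₁ s₂) C o
  | infer_false {β μ P s₁ s₂ C o} (h : ¬ MSat β P)
      (hs : BigStep β μ s₂ C o) :
      BigStep β μ (.infer P s₁ s₂) C o
  /- While: unfolds to an assertion of the invariant followed by an if. -/
  | whileStep {β μ p pe s C o}
      (h : BigStep β μ
        (.seq (.assert pe) (.ite p (.seq s (.while p pe s)) .skip)) C o) :
      BigStep β μ (.while p pe s) C o
  /- Sequencing (also propagates errors from the second statement). -/
  | seq {β μ s₁ s₂ β' μ' C o₁ o₂}
      (hs₁ : BigStep β μ s₁ (some (β', μ')) o₁)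
      (hs₂ : BigStep β' μ' s₂ C o₂) :
      BigStep β μ (.seq s₁ s₂) C (o₁ ++ o₂)
  | seq_err {β μ s₁ s₂ o₁} (hs₁ : BigStep β μ s₁ none o₁) :
      BigStep β μ (.seq s₁ s₂) none o₁
  /- Skip. -/
  | skip {β μ} : BigStep β μ .skip (some (β, μ)) []

/-! Every execution step keeps the true environment (when it is not `·`) inside the belief
state, since assignments and choices update both with the same value, observations
only discard environments that disagree with the true one, and a nondeterministic `if` sends
the true environment into the branch whose part of the belief state contains it. -/

def Tracks (β : Belief) (μ : Option Env) : Prop := ∀ σ ∈ μ, σ ∈ β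

theorem Tracks.mono {β₁ β₂ : Belief} {μ : Option Env} (h : β₁ ⊆ β₂) (hμ : Tracks β₁ μ) :
    Tracks β₂ μ :=
  fun σ hσ => h (hμ σ hσ)

theorem tracks_none (β : Belief) : Tracks β none := by
  simp [Tracks]

theorem tracks_some {β : Belief} {σ : Env} : Tracks β (some σ) ↔ σ ∈ β := by
  simp [Tracks]

theorem SplitEnv.tracks {β : Belief} {μ μT μF : Option Env} {p : Pprop}
    (hsplit : SplitEnv μ p μT μF) (hμ : Tracks β μ) :
    Tracks {σ ∈ β | Sat σ p} μT ∧ Tracks {σ ∈ β | ¬ Sat σ p} μF := by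
  cases hsplit with
  | none => exact ⟨tracks_none _, tracks_none _⟩
  | pos hp => exact ⟨tracks_some.2 ⟨tracks_some.1 hμ, hp⟩, tracks_none _⟩
  | neg hp => exact ⟨tracks_none _, tracks_some.2 ⟨tracks_some.1 hμ, hp⟩⟩

theorem JoinEnv.tracks {βT βF : Belief} {μ μT μF μ' : Option Env} {p : Pprop}
    (hjoin : JoinEnv μ p μT μF μ') (hT : Tracks βT μT) (hF : Tracks βF μF) :
    Tracks (βT ∪ βF) μ' := by
  cases hjoin with
  | none => exact tracks_none _
  | pos => exact hT.mono Set.subset_union_left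
  | neg => exact hF.mono Set.subset_union_right

theorem BigStep.tracks {β : Belief} {μ : Option Env} {s : Stmt} {C : Config} {o : Obs}
    (h : BigStep β μ s C o) (hμ : Tracks β μ) : ∀ c ∈ C, Tracks c.1 c.2 := by
  induction h with
  | assign_none | choose_none => simpa using tracks_none _
  | assign_some he =>
      simpa [tracks_some] using ⟨_, tracks_some.1 hμ, _, he, rfl⟩
  | choose_some hp =>
      simpa [tracks_some] using ⟨_, tracks_some.1 hμ, _, hp, rfl⟩
  | assert_ok | skip => simpa using hμ
  | observe_some => simpa [tracks_some] using tracks_some.1 hμ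
  | assert_fail | observe_none | ite_nondet_obs | ite_nondet_err₁ | ite_nondet_err₂ | seq_err =>
      simp
  | ite_det_true _ _ ih | ite_det_false _ _ ih | infer_true _ _ ih | infer_false _ _ ih
    | whileStep _ ih => exact ih hμ
  | ite_nondet _ hsplit _ _ hjoin ih₁ ih₂ =>
      obtain ⟨hT, hF⟩ := hsplit.tracks hμ
      simpa using hjoin.tracks (by simpa using ih₁ hT) (by simpa using ih₂ hF)
  | seq _ _ ih₁ ih₂ => exact ih₂ (by simpa using ih₁ hμ)

/-- **Belief Soundness** (Theorem 3.1): if `σ ∈ β` and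
`⟨β, σ, s⟩ ⇓ ⟨β', σ' | o⟩`, then `σ' ∈ β'`. -/
theorem belief_soundness
    (β : Belief) (σ : Env) (s : Stmt) (β' : Belief) (σ' : Env) (o : Obs)
    (hmem : σ ∈ β)
    (hstep : BigStep β (some σ) s (some (β', some σ')) o) :
    σ' ∈ β' :=
  tracks_some.1 (hstep.tracks (tracks_some.2 hmem) _ rfl)

end BLIMP
end

section
/- Belief Precision: For every belief state β, optional environment μ, statement s, belief state β', optional environment μ', and observation list o, if ⟨β, μ, s⟩ ⇓ ⟨β', μ' | o⟩ (the execution succeeds, producing a non-error configuration), then for every environment σβ' ∈ β' there is some environment σβ ∈ β such that ⟨β, σβ, s⟩ ⇓ ⟨β', σβ' | o⟩. -/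
namespace BLIMP

theorem BigStep.erase_env {β μ s β' μ'} (h : BigStep β μ s (some (β', μ')) []) :
    BigStep β none s (some (β', none)) [] := by
  generalize hC : some (β', μ') = C at h
  generalize ho : ([] : Obs) = o at h
  induction h generalizing β' μ' with
  | assert_fail | observe_none | ite_nondet_obs | ite_nondet_err₁ | ite_nondet_err₂ | seq_err =>
    cases hC
  | assign_none | assign_some => cases hC; exact .assign_none
  | choose_none | choose_some => cases hC; exact .choose_none
  | assert_ok hpe => cases hC; exact .assert_ok hpe
  | observe_some => cases ho
  | skip => cases hC; exact .skip
  | ite_det_true hp _ ih => exact .ite_det_true hp (ih hC ho)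
  | ite_det_false hp _ ih => exact .ite_det_false hp (ih hC ho)
  | infer_true hP _ ih => exact .infer_true hP (ih hC ho)
  | infer_false hP _ ih => exact .infer_false hP (ih hC ho)
  | whileStep _ ih => exact .whileStep (ih hC ho)
  | ite_nondet hp _ _ _ _ ih₁ ih₂ =>
    cases hC; exact .ite_nondet hp .none (ih₁ rfl rfl) (ih₂ rfl rfl) .none
  | seq _ _ ih₁ ih₂ =>
    obtain ⟨rfl, rfl⟩ := List.append_eq_nil_iff.mp ho.symm
    exact .seq (ih₁ rfl rfl) (ih₂ hC rfl)

/-- **Belief Precision** (Theorem 3.2): if `⟨β, μ, s⟩ ⇓ ⟨β', μ' | o⟩`, then for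
every `σβ' ∈ β'` there is some `σβ ∈ β` such that
`⟨β, σβ, s⟩ ⇓ ⟨β', σβ' | o⟩`. -/
theorem belief_precision
    (β : Belief) (μ : Option Env) (s : Stmt) (β' : Belief) (μ' : Option Env)
    (o : Obs)
    (hstep : BigStep β μ s (some (β', μ')) o) :
    ∀ σβ' ∈ β', ∃ σβ ∈ β, BigStep β (some σβ) s (some (β', some σβ')) o := by
  intro σ' hσ'
  generalize hC : some (β', μ') = C at hstep
  induction hstep generalizing β' μ' σ' with
  | assert_fail | observe_none | ite_nondet_obs | ite_nondet_err₁ | ite_nondet_err₂ | seq_err =>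
    cases hC
  | assign_none | assign_some =>
    cases hC
    obtain ⟨σ, hσ, c, hc, rfl⟩ := hσ'
    exact ⟨σ, hσ, .assign_some hc⟩
  | choose_none | choose_some =>
    cases hC
    obtain ⟨σ, hσ, c, hc, rfl⟩ := hσ'
    exact ⟨σ, hσ, .choose_some hc⟩
  | assert_ok hpe => cases hC; exact ⟨σ', hσ', .assert_ok hpe⟩
  | observe_some =>
    cases hC
    obtain ⟨hσ', hx⟩ := hσ'
    exact ⟨σ', hσ', hx ▸ .observe_some⟩
  | skip => cases hC; exact ⟨σ', hσ', .skip⟩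
  | ite_det_true hp _ ih => exact (ih _ _ _ hσ' hC).imp fun _ => .imp_right (.ite_det_true hp)
  | ite_det_false hp _ ih => exact (ih _ _ _ hσ' hC).imp fun _ => .imp_right (.ite_det_false hp)
  | infer_true hP _ ih => exact (ih _ _ _ hσ' hC).imp fun _ => .imp_right (.infer_true hP)
  | infer_false hP _ ih => exact (ih _ _ _ hσ' hC).imp fun _ => .imp_right (.infer_false hP)
  | whileStep _ ih => exact (ih _ _ _ hσ' hC).imp fun _ => .imp_right .whileStep
  | seq _ _ ih₁ ih₂ =>
    obtain ⟨σm, hσm, h₂⟩ := ih₂ _ _ _ hσ' hC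
    exact (ih₁ _ _ _ hσm rfl).imp fun _ => .imp_right (.seq · h₂)
  | ite_nondet hp _ hs₁ hs₂ _ ih₁ ih₂ =>
    cases hC
    -- the branch not taken emitted no observations, so it can be replayed with `·`
    rcases hσ' with hσ' | hσ'
    · obtain ⟨σ, ⟨hσ, hpσ⟩, h₁⟩ := ih₁ _ _ _ hσ' rfl
      exact ⟨σ, hσ, .ite_nondet hp (.pos hpσ) h₁ hs₂.erase_env (.pos hpσ)⟩
    · obtain ⟨σ, ⟨hσ, hpσ⟩, h₂⟩ := ih₂ _ _ _ hσ' rfl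
      exact ⟨σ, hσ, .ite_nondet hp (.neg hpσ) hs₁.erase_env h₂ (.neg hpσ)⟩

end BLIMP
end

section
/- Belief Determinism: For every belief state β, optional environments μ₁ and μ₂, statement s, belief states β₁' and β₂', optional environments μ₁' and μ₂', and observation lists o₁ and o₂, if ⟨β, μ₁, s⟩ ⇓ ⟨β₁', μ₁' | o₁⟩ and ⟨β, μ₂, s⟩ ⇓ ⟨β₂', μ₂' | o₂⟩ and o₁ = o₂, then β₁' = β₂'. In other words, the resulting belief state depends on the true environment only through the observation list. -/
namespace BLIMP

/-!
Outside `observe`, the belief state evolves independently of the true environment, and `observe`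
filters it by the observed value only. The difficulty is a sequence `s₁; s₂`: two runs with the
same observation list may split it differently between `s₁` and `s₂`. That can only happen once
the intermediate belief state is empty (`observe` on the empty belief state still records a
value), and from the empty belief state every run ends in the empty belief state. So one proves by
induction that runs with prefix-comparable observation lists end in the same belief state, with
equal observation lists unless that belief state is empty.
-/

theorem _root_.List.prefix_or_prefix_of_append_prefix_or_prefix {α : Type*}
    {l₁ l₂ l₁' l₂' : List α} (h : l₁ ++ l₂ <+: l₁' ++ l₂' ∨ l₁' ++ l₂' <+: l₁ ++ l₂) :
    l₁ <+: l₁' ∨ l₁' <+: l₁ := by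
  rcases h with h | h
  · exact List.prefix_or_prefix_of_prefix ((List.prefix_append _ _).trans h)
      (List.prefix_append _ _)
  · exact (List.prefix_or_prefix_of_prefix ((List.prefix_append _ _).trans h)
      (List.prefix_append _ _)).symm

theorem eq_empty_of_box_of_box_not {β : Belief} {p : Pprop}
    (h : MSat β (.box p)) (h' : MSat β (.box (.not p))) : β = ∅ :=
  Set.eq_empty_of_forall_notMem fun σ hσ => h' σ hσ (h σ hσ)

theorem BigStep.eq_empty_of_empty {β μ s C o} (h : BigStep β μ s C o) (hβ : β = ∅)
    {β' μ'} (hC : C = some (β', μ')) : β' = ∅ := by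
  induction h generalizing β' μ' with
  | assign_none | assign_some _ | choose_none | choose_some _ | observe_some =>
    cases hC; subst hβ; simp
  | assert_ok _ | skip => cases hC; exact hβ
  | assert_fail _ | observe_none | ite_nondet_obs _ _ _ _ _ | ite_nondet_err₁ _ _ _
    | ite_nondet_err₂ _ _ _ | seq_err _ => cases hC
  | ite_det_true _ _ ih | ite_det_false _ _ ih | infer_true _ _ ih | infer_false _ _ ih
    | whileStep _ ih => exact ih hβ hC
  | ite_nondet h =>
    obtain ⟨⟨σ, hσ, -⟩, -⟩ := h
    exact absurd (hβ ▸ hσ) (Set.notMem_empty σ)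
  | seq _ _ ih₁ ih₂ => exact ih₂ (ih₁ hβ rfl) hC

def BeliefDetermined (β : Belief) (s : Stmt) (β₁ : Belief) (o₁ : Obs) : Prop :=
  ∀ μ₂ β₂ μ₂' o₂, BigStep β μ₂ s (some (β₂, μ₂')) o₂ → (o₁ <+: o₂ ∨ o₂ <+: o₁) →
    β₁ = β₂ ∧ (o₁ = o₂ ∨ β₁ = ∅)

theorem beliefDetermined_of_empty {β μ s s' β₁ μ₁ o₁} (hβ : β = ∅)
    (h : BigStep β μ s (some (β₁, μ₁)) o₁) : BeliefDetermined β s' β₁ o₁ := by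
  intro μ₂ β₂ μ₂' o₂ h₂ _
  have hβ₁ := h.eq_empty_of_empty hβ rfl
  exact ⟨hβ₁.trans (h₂.eq_empty_of_empty hβ rfl).symm, .inr hβ₁⟩

theorem beliefDetermined_observe {β : Belief} {σ : Env} {x : Var} :
    BeliefDetermined β (.observe x) {σβ ∈ β | σβ x = σ x} [(x, σ x)] := by
  intro μ₂ β₂ μ₂' o₂ h₂ ho
  cases h₂ with
  | @observe_some _ σ' _ =>
    have hx : σ x = σ' x := by
      rcases ho with h | h <;> simp only [List.cons_prefix_cons, Prod.mk.injEq] at h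
      exacts [h.1.2, h.1.2.symm]
    rw [hx]
    exact ⟨rfl, .inl rfl⟩

theorem BigStep.of_ite_of_box {β μ p s₁ s₂ C o} (hp : MSat β (.box p))
    (h : BigStep β μ (.ite p s₁ s₂) C o) :
    BigStep β μ s₁ C o ∨ β = ∅ ∧ BigStep β μ s₂ C o := by
  cases h with
  | ite_det_true _ hs => exact .inl hs
  | ite_det_false hnp hs => exact .inr ⟨eq_empty_of_box_of_box_not hp hnp, hs⟩
  | ite_nondet h | ite_nondet_obs h | ite_nondet_err₁ h | ite_nondet_err₂ h =>
    obtain ⟨-, σ, hσ, hnp⟩ := h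
    exact absurd (hp σ hσ) hnp

theorem BigStep.of_ite_of_box_not {β μ p s₁ s₂ C o} (hnp : MSat β (.box (.not p)))
    (h : BigStep β μ (.ite p s₁ s₂) C o) :
    BigStep β μ s₂ C o ∨ β = ∅ ∧ BigStep β μ s₁ C o := by
  cases h with
  | ite_det_true hp hs => exact .inr ⟨eq_empty_of_box_of_box_not hp hnp, hs⟩
  | ite_det_false _ hs => exact .inl hs
  | ite_nondet h | ite_nondet_obs h | ite_nondet_err₁ h | ite_nondet_err₂ h =>
    obtain ⟨⟨σ, hσ, hp⟩, -⟩ := h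
    exact absurd hp (hnp σ hσ)

theorem BeliefDetermined.ite_of_box {β μ p s₁ s₂ β₁ μ₁ o₁} (hp : MSat β (.box p))
    (hs : BigStep β μ s₁ (some (β₁, μ₁)) o₁) (h : BeliefDetermined β s₁ β₁ o₁) :
    BeliefDetermined β (.ite p s₁ s₂) β₁ o₁ := by
  intro μ₂ β₂ μ₂' o₂ h₂ ho
  rcases h₂.of_ite_of_box hp with h₂ | ⟨hβ, h₂⟩
  · exact h μ₂ β₂ μ₂' o₂ h₂ ho
  · exact beliefDetermined_of_empty hβ hs μ₂ β₂ μ₂' o₂ h₂ ho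

theorem BeliefDetermined.ite_of_box_not {β μ p s₁ s₂ β₁ μ₁ o₁} (hnp : MSat β (.box (.not p)))
    (hs : BigStep β μ s₂ (some (β₁, μ₁)) o₁) (h : BeliefDetermined β s₂ β₁ o₁) :
    BeliefDetermined β (.ite p s₁ s₂) β₁ o₁ := by
  intro μ₂ β₂ μ₂' o₂ h₂ ho
  rcases h₂.of_ite_of_box_not hnp with h₂ | ⟨hβ, h₂⟩
  · exact h μ₂ β₂ μ₂' o₂ h₂ ho
  · exact beliefDetermined_of_empty hβ hs μ₂ β₂ μ₂' o₂ h₂ ho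

theorem BeliefDetermined.ite_nondet {β p s₁ s₂ βT βF}
    (hp : MSat β (.and (.dia p) (.dia (.not p))))
    (hT : BeliefDetermined {σβ ∈ β | Sat σβ p} s₁ βT [])
    (hF : BeliefDetermined {σβ ∈ β | ¬ Sat σβ p} s₂ βF []) :
    BeliefDetermined β (.ite p s₁ s₂) (βT ∪ βF) [] := by
  intro μ₂ β₂ μ₂' o₂ h₂ _
  cases h₂ with
  | ite_det_true hp' =>
    obtain ⟨-, σ, hσ, hnp⟩ := hp
    exact absurd (hp' σ hσ) hnp
  | ite_det_false hnp =>
    obtain ⟨⟨σ, hσ, hp⟩, -⟩ := hp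
    exact absurd hp (hnp σ hσ)
  | ite_nondet _ _ hs₁ hs₂ =>
    rw [(hT _ _ _ _ hs₁ (.inl List.nil_prefix)).1, (hF _ _ _ _ hs₂ (.inl List.nil_prefix)).1]
    exact ⟨rfl, .inl rfl⟩

theorem BeliefDetermined.seq {β β' β'' μ' μ'' s₁ s₂ o₁ o₂}
    (h₁ : BeliefDetermined β s₁ β' o₁) (hs₂ : BigStep β' μ' s₂ (some (β'', μ'')) o₂)
    (h₂ : BeliefDetermined β' s₂ β'' o₂) :
    BeliefDetermined β (.seq s₁ s₂) β'' (o₁ ++ o₂) := by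
  intro μ₂ β₂ μ₂' o₂' hseq ho
  cases hseq with
  | seq hs₁' hs₂' =>
    obtain ⟨rfl, ho₁ | hempty⟩ :=
      h₁ _ _ _ _ hs₁' (List.prefix_or_prefix_of_append_prefix_or_prefix ho)
    · subst ho₁
      have ho₂ := ho.imp (List.prefix_append_right_inj _).mp (List.prefix_append_right_inj _).mp
      obtain ⟨rfl, ho₂ | hempty⟩ := h₂ _ _ _ _ hs₂' ho₂
      exacts [⟨rfl, .inl (by rw [ho₂])⟩, ⟨rfl, .inr hempty⟩]
    · have hβ'' := hs₂.eq_empty_of_empty hempty rfl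
      exact ⟨hβ''.trans (hs₂'.eq_empty_of_empty hempty rfl).symm, .inr hβ''⟩

theorem BigStep.beliefDetermined {β μ s C o} (h : BigStep β μ s C o) {β₁ μ₁}
    (hC : C = some (β₁, μ₁)) : BeliefDetermined β s β₁ o := by
  induction h generalizing β₁ μ₁ with
  | assign_none | assign_some _ | choose_none | choose_some _ | assert_ok _ | skip =>
    cases hC
    intro μ₂ β₂ μ₂' o₂ h₂ _
    cases h₂ <;> exact ⟨rfl, .inl rfl⟩
  | assert_fail _ | observe_none | ite_nondet_obs _ _ _ _ _ | ite_nondet_err₁ _ _ _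
    | ite_nondet_err₂ _ _ _ | seq_err _ => cases hC
  | observe_some => cases hC; exact beliefDetermined_observe
  | ite_det_true hp hs ih => subst hC; exact .ite_of_box hp hs (ih rfl)
  | ite_det_false hnp hs ih => subst hC; exact .ite_of_box_not hnp hs (ih rfl)
  | ite_nondet hp _ _ _ _ ihT ihF => cases hC; exact .ite_nondet hp (ihT rfl) (ihF rfl)
  | infer_true hP _ ih =>
    intro μ₂ β₂ μ₂' o₂ h₂ ho
    cases h₂ with
    | infer_true _ hs => exact ih hC _ _ _ _ hs ho
    | infer_false hnP _ => exact absurd hP hnP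
  | infer_false hnP _ ih =>
    intro μ₂ β₂ μ₂' o₂ h₂ ho
    cases h₂ with
    | infer_true hP _ => exact absurd hP hnP
    | infer_false _ hs => exact ih hC _ _ _ _ hs ho
  | whileStep _ ih =>
    intro μ₂ β₂ μ₂' o₂ h₂ ho
    cases h₂ with
    | whileStep hs => exact ih hC _ _ _ _ hs ho
  | seq _ hs₂ ih₁ ih₂ => subst hC; exact (ih₁ rfl).seq hs₂ (ih₂ rfl)

/-- **Belief Determinism** (Theorem 3.3): if `⟨β, μ₁, s⟩ ⇓ ⟨β₁', μ₁' | o₁⟩` and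
`⟨β, μ₂, s⟩ ⇓ ⟨β₂', μ₂' | o₂⟩` and `o₁ = o₂`, then `β₁' = β₂'`: the resulting
belief state depends on the true environment only through the observations. -/
theorem belief_determinism
    (β : Belief) (μ₁ μ₂ : Option Env) (s : Stmt)
    (β₁' β₂' : Belief) (μ₁' μ₂' : Option Env) (o₁ o₂ : Obs)
    (h₁ : BigStep β μ₁ s (some (β₁', μ₁')) o₁)
    (h₂ : BigStep β μ₂ s (some (β₂', μ₂')) o₂)
    (ho : o₁ = o₂) :
    β₁' = β₂' :=
  (h₁.beliefDetermined rfl μ₂ β₂' μ₂' o₂ h₂ (.inl (ho ▸ List.prefix_refl o₁))).1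

end BLIMP
end
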